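/- arXiv:2407.18837 — 2 statements merged into one kernel-verified Lean document; each statement's English description precedes it below -/
import Mathlib

section
/- Attainment of the worst-case distribution: Let T ∈ ℝ^{r×d} be nonzero, let the nominal P° on ℝ^d have zero mean, finite second moment, and identity covariance, and let ρ > 0. Let γ* be the unique γ > ‖T‖_op² satisfying Tr[((I − γ⁻¹ T Tᵀ)⁻¹ − I)²] = ρ², and let P* be the pushforward of P° under the linear map ξ ↦ (I − γ*⁻¹ Tᵀ T)⁻¹ ξ. Then P* lies in the W₂-ball of radius ρ around P° and attains the worst-case value: ∫‖Tξ‖² dP*(ξ) = sup{ ∫‖Tξ‖² dP(ξ) : P in the W₂-ball of radius ρ around P° } = γ*ρ² + γ*·Tr[(I − γ*⁻¹ T Tᵀ)⁻¹ − I]. -/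
open Matrix MeasureTheory

noncomputable section

/-- Squared Euclidean norm of a finitely-indexed real vector. -/
def sqNorm {ι : Type*} [Fintype ι] (x : ι → ℝ) : ℝ := ∑ i, (x i) ^ 2

/-- `P` lies in the `W₂`-ball of radius `ρ` around `P0`: `P` is a probability measure
with finite second moment and there is a coupling of `P` and `P0` of cost at most `ρ²`. -/
def MemW2Ball {ι : Type*} [Fintype ι] (P P0 : Measure (ι → ℝ)) (ρ : ℝ) : Prop :=
  IsProbabilityMeasure P ∧
  (∫⁻ ξ, ENNReal.ofReal (sqNorm ξ) ∂P) < ⊤ ∧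
  ∃ μ : Measure ((ι → ℝ) × (ι → ℝ)), IsProbabilityMeasure μ ∧
    μ.map Prod.fst = P ∧ μ.map Prod.snd = P0 ∧
    (∫⁻ xy, ENNReal.ofReal (sqNorm fun i => xy.1 i - xy.2 i) ∂μ) ≤ ENNReal.ofReal (ρ ^ 2)

/-- The nominal distribution: a probability measure with finite second moment,
zero mean, and identity covariance. -/
def IsNominal {ι : Type*} [Fintype ι] [DecidableEq ι] (P0 : Measure (ι → ℝ)) : Prop :=
  IsProbabilityMeasure P0 ∧ Integrable (fun ξ => sqNorm ξ) P0 ∧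
  (∀ i, (∫ ξ, ξ i ∂P0) = 0) ∧
  (∀ i j, (∫ ξ, ξ i * ξ j ∂P0) = if i = j then (1 : ℝ) else 0)

/-- The set of worst-case mean-squared-error values `∫‖Tξ‖² dP` for `P` ranging over
the `W₂`-ball of radius `ρ` around `P0`. -/
def wcSet {ι : Type*} [Fintype ι] {r : ℕ} (T : Matrix (Fin r) ι ℝ)
    (P0 : Measure (ι → ℝ)) (ρ : ℝ) : Set ℝ :=
  {e | ∃ P, MemW2Ball P P0 ρ ∧ e = ∫ ξ, sqNorm (T.mulVec ξ) ∂P}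

/-- The squared operator (spectral) norm of a real matrix `T`, characterized as the least
`c ≥ 0` with `c·I − TᵀT ⪰ 0`. -/
def opNormSq {r d : ℕ} (T : Matrix (Fin r) (Fin d) ℝ) : ℝ :=
  sInf {c : ℝ | 0 ≤ c ∧ (c • (1 : Matrix (Fin d) (Fin d) ℝ) - Tᵀ * T).PosSemidef}

/-! With `G = 1 - γ⁻¹ TᵀT` positive definite, the Fenchel–Young inequality
`2 ⟪x, y⟫ ≤ ⟪x, G x⟫ + ⟪y, G⁻¹ y⟫` gives the pointwise bound
`‖T x‖² ≤ γ ‖x - y‖² + γ ⟪y, (G⁻¹ - 1) y⟫`. Integrating it against a coupling of `P` with `P0`,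
the identity covariance of `P0` turns the last term into `γ tr(G⁻¹ - 1)`, so every `P` in the
ball has value at most `γ ρ² + γ tr(G⁻¹ - 1)`. Equality holds along `x = G⁻¹ y`, i.e. for the
coupling `(G⁻¹ ξ, ξ)`, whose cost is `tr((G⁻¹ - 1)²) = ρ²`. The push-through identity
`(1 - AB)⁻¹ - 1 = A (1 - BA)⁻¹ B` moves these traces from `TᵀT` to `TTᵀ`. -/

section SqNorm

variable {ι κ : Type*} [Fintype ι] [Fintype κ]

lemma sqNorm_eq_dotProduct (x : ι → ℝ) : sqNorm x = x ⬝ᵥ x := by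
  simp [sqNorm, dotProduct, sq]

lemma sqNorm_nonneg (x : ι → ℝ) : 0 ≤ sqNorm x :=
  Finset.sum_nonneg fun i _ => sq_nonneg (x i)

@[fun_prop]
lemma continuous_sqNorm : Continuous (sqNorm : (ι → ℝ) → ℝ) := by
  unfold sqNorm; fun_prop

lemma sqNorm_mulVec (C : Matrix κ ι ℝ) (x : ι → ℝ) :
    sqNorm (C *ᵥ x) = x ⬝ᵥ (Cᵀ * C) *ᵥ x := by
  rw [sqNorm_eq_dotProduct, ← mulVec_mulVec, dotProduct_mulVec x, vecMul_transpose]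

lemma sq_apply_le_sqNorm (x : ι → ℝ) (i : ι) : x i ^ 2 ≤ sqNorm x :=
  Finset.single_le_sum (fun j _ => sq_nonneg (x j)) (Finset.mem_univ i)

open scoped Matrix.Norms.L2Operator in
lemma sqNorm_mulVec_le [DecidableEq ι] (C : Matrix κ ι ℝ) (x : ι → ℝ) :
    sqNorm (C *ᵥ x) ≤ ‖C‖ ^ 2 * sqNorm x := by
  have h := l2_opNorm_mulVec C (WithLp.toLp 2 x)
  have h2 := pow_le_pow_left₀ (norm_nonneg _) h 2
  simpa [mul_pow, EuclideanSpace.real_norm_sq_eq, sqNorm] using h2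

lemma dotProduct_mulVec_eq_sum (Q : Matrix ι ι ℝ) (ξ : ι → ℝ) :
    ξ ⬝ᵥ Q *ᵥ ξ = ∑ i, ∑ j, Q i j * (ξ i * ξ j) := by
  simp only [dotProduct, mulVec, Finset.mul_sum]
  exact Finset.sum_congr rfl fun i _ => Finset.sum_congr rfl fun j _ => by ring

end SqNorm


section LinearAlgebra

variable {m n : Type*} [Fintype m] [Fintype n] [DecidableEq n]

/-- Fenchel–Young for the quadratic form of `G`; equality holds at `x = G⁻¹ y`. -/
lemma two_mul_dotProduct_le_of_posDef {G : Matrix n n ℝ} (hG : G.PosDef) (x y : n → ℝ) :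
    2 * (x ⬝ᵥ y) ≤ x ⬝ᵥ G *ᵥ x + y ⬝ᵥ G⁻¹ *ᵥ y := by
  set z := G⁻¹ *ᵥ y
  have hGz : G *ᵥ z = y := by
    rw [mulVec_mulVec, mul_nonsing_inv _ hG.det_pos.ne'.isUnit, one_mulVec]
  have hzG : z ⬝ᵥ G *ᵥ x = y ⬝ᵥ x := by
    rw [dotProduct_mulVec, ← mulVec_transpose, (isHermitian_iff_isSymm.mp hG.isHermitian).eq, hGz]
  have h := hG.posSemidef.dotProduct_mulVec_nonneg (x - z)
  simp only [star_trivial, mulVec_sub, sub_dotProduct, dotProduct_sub, hGz, hzG] at h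
  have : z ⬝ᵥ y = y ⬝ᵥ z := dotProduct_comm z y
  linarith [dotProduct_comm x y]

open scoped Matrix.Norms.L2Operator in
lemma posSemidef_sq_norm_smul_one_sub (T : Matrix m n ℝ) :
    ((‖T‖ ^ 2) • (1 : Matrix n n ℝ) - Tᵀ * T).PosSemidef := by
  have hT : (Tᵀ * T).IsHermitian := by
    simpa [conjTranspose_eq_transpose_of_trivial] using isHermitian_conjTranspose_mul_self T
  refine .of_dotProduct_mulVec_nonneg ((isHermitian_one.smul (.all _)).sub hT) fun x => ?_
  have h := sqNorm_mulVec_le T x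
  rw [sqNorm_mulVec, sqNorm_eq_dotProduct] at h
  simp only [star_trivial, sub_mulVec, smul_mulVec, one_mulVec, dotProduct_sub,
    dotProduct_smul, smul_eq_mul]
  linarith

end LinearAlgebra

section OpNormSq

variable {r d : ℕ} {T : Matrix (Fin r) (Fin d) ℝ} {γ : ℝ}

open scoped Matrix.Norms.L2Operator in
lemma exists_posSemidef_smul_one_sub_of_opNormSq_lt (h : opNormSq T < γ) :
    ∃ c, 0 ≤ c ∧ c < γ ∧ (c • (1 : Matrix (Fin d) (Fin d) ℝ) - Tᵀ * T).PosSemidef := by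
  obtain ⟨c, ⟨hc0, hc⟩, hcγ⟩ := exists_lt_of_csInf_lt
    (by exact ⟨‖T‖ ^ 2, sq_nonneg _, posSemidef_sq_norm_smul_one_sub T⟩) h
  exact ⟨c, hc0, hcγ, hc⟩

lemma pos_of_opNormSq_lt (h : opNormSq T < γ) : 0 < γ := by
  obtain ⟨c, hc0, hcγ, -⟩ := exists_posSemidef_smul_one_sub_of_opNormSq_lt h
  linarith

lemma posDef_one_sub_inv_smul_of_opNormSq_lt (h : opNormSq T < γ) :
    ((1 : Matrix (Fin d) (Fin d) ℝ) - γ⁻¹ • (Tᵀ * T)).PosDef := by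
  obtain ⟨c, -, hcγ, hc⟩ := exists_posSemidef_smul_one_sub_of_opNormSq_lt h
  have hγ := pos_of_opNormSq_lt h
  have hpos := ((PosDef.one.smul (sub_pos.mpr hcγ)).add_posSemidef hc).smul (inv_pos.mpr hγ)
  convert hpos using 1
  rw [← add_sub_assoc, ← add_smul, sub_add_cancel, smul_sub, smul_smul, inv_mul_cancel₀ hγ.ne',
    one_smul]

end OpNormSq

section PushThrough

variable {m n K : Type*} [Fintype m] [Fintype n] [DecidableEq m] [DecidableEq n] [Field K]

lemma trace_mul_pow_comm (X : Matrix m n K) (Y : Matrix n m K) {k : ℕ} (hk : k ≠ 0) :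
    ((X * Y) ^ k).trace = ((Y * X) ^ k).trace := by
  obtain ⟨k, rfl⟩ := Nat.exists_eq_succ_of_ne_zero hk
  have hpow : ∀ j : ℕ, (X * Y) ^ (j + 1) = X * (Y * X) ^ j * Y := by
    intro j
    induction j with
    | zero => simp
    | succ j ih => rw [pow_succ, ih, pow_succ]; simp only [Matrix.mul_assoc]
  rw [hpow, Matrix.mul_assoc, trace_mul_comm, Matrix.mul_assoc, ← pow_succ]

lemma inv_one_sub_mul_sub_one (A : Matrix m n K) (B : Matrix n m K) (h : (1 - B * A).det ≠ 0) :
    (1 - A * B)⁻¹ - 1 = A * ((1 - B * A)⁻¹ * B) := by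
  suffices (1 - A * B)⁻¹ = 1 + A * ((1 - B * A)⁻¹ * B) by rw [this, add_sub_cancel_left]
  refine inv_eq_right_inv ?_
  have hN : A * ((1 - B * A) * (1 - B * A)⁻¹) * B = A * B := by
    rw [mul_nonsing_inv _ h.isUnit, Matrix.mul_one]
  simp only [Matrix.mul_add, Matrix.sub_mul, Matrix.mul_sub, Matrix.one_mul, Matrix.mul_one,
    Matrix.mul_assoc] at hN ⊢
  rw [hN, sub_add_cancel]

lemma trace_inv_one_sub_mul_sub_one_pow_comm (A : Matrix m n K) (B : Matrix n m K)
    (h : (1 - A * B).det ≠ 0) {k : ℕ} (hk : k ≠ 0) :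
    (((1 - A * B)⁻¹ - 1) ^ k).trace = (((1 - B * A)⁻¹ - 1) ^ k).trace := by
  have h' : (1 - B * A).det ≠ 0 := det_one_sub_mul_comm A B ▸ h
  have hBA : (1 - B * A)⁻¹ - 1 = (1 - B * A)⁻¹ * B * A := by
    have hNG : (1 - B * A)⁻¹ * (1 - B * A) = 1 := nonsing_inv_mul _ h'.isUnit
    set N := (1 - B * A)⁻¹
    rw [Matrix.mul_sub, Matrix.mul_one] at hNG
    rw [← hNG, sub_sub_cancel, Matrix.mul_assoc]
  rw [inv_one_sub_mul_sub_one A B h', hBA, trace_mul_pow_comm _ _ hk, Matrix.mul_assoc]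

/-- With `A = (1 - γ⁻¹ M)⁻¹` one has `A - 1 = γ⁻¹ A M`, whence `A M A = γ (A - 1) A`. -/
lemma inv_mul_mul_inv_eq (M : Matrix n n K) {γ : K} (hγ : γ ≠ 0)
    (h : (1 - γ⁻¹ • M).det ≠ 0) :
    (1 - γ⁻¹ • M)⁻¹ * M * (1 - γ⁻¹ • M)⁻¹ =
      γ • (((1 - γ⁻¹ • M)⁻¹ - 1) ^ 2 + ((1 - γ⁻¹ • M)⁻¹ - 1)) := by
  set A := (1 - γ⁻¹ • M)⁻¹
  have hAG : A * (1 - γ⁻¹ • M) = 1 := nonsing_inv_mul _ h.isUnit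
  have hAM : A * M = γ • (A - 1) := by
    rw [Matrix.mul_sub, Matrix.mul_one, Matrix.mul_smul] at hAG
    rw [← hAG, sub_sub_cancel, smul_smul, mul_inv_cancel₀ hγ, one_smul]
  rw [hAM, Matrix.smul_mul]
  congr 1
  noncomm_ring

end PushThrough

section PointwiseBound

variable {ι κ : Type*} [Fintype ι] [DecidableEq ι] [Fintype κ]

lemma sqNorm_mulVec_le_of_posDef (T : Matrix κ ι ℝ) {γ : ℝ} (hγ : 0 < γ)
    (hG : (1 - γ⁻¹ • (Tᵀ * T)).PosDef) (x y : ι → ℝ) :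
    sqNorm (T *ᵥ x) ≤
      γ * sqNorm (x - y) + γ * (y ⬝ᵥ ((1 - γ⁻¹ • (Tᵀ * T))⁻¹ - 1) *ᵥ y) := by
  have h := mul_le_mul_of_nonneg_left (two_mul_dotProduct_le_of_posDef hG x y) hγ.le
  simp only [sub_mulVec, one_mulVec, smul_mulVec, dotProduct_sub, dotProduct_smul,
    smul_eq_mul] at h ⊢
  rw [mul_add, mul_sub, mul_inv_cancel_left₀ hγ.ne'] at h
  rw [sqNorm_mulVec, sqNorm_eq_dotProduct, sub_dotProduct, dotProduct_sub, dotProduct_sub,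
    dotProduct_comm y x]
  linarith

omit [DecidableEq ι] in
lemma integral_sqNorm_sub_le_of_lintegral_le {μ : Measure ((ι → ℝ) × (ι → ℝ))} {ρ : ℝ}
    (h : ∫⁻ z, ENNReal.ofReal (sqNorm fun i => z.1 i - z.2 i) ∂μ ≤ ENNReal.ofReal (ρ ^ 2)) :
    Integrable (fun z => sqNorm (z.1 - z.2)) μ ∧ ∫ z, sqNorm (z.1 - z.2) ∂μ ≤ ρ ^ 2 := by
  have hm : AEStronglyMeasurable (fun z : (ι → ℝ) × (ι → ℝ) => sqNorm (z.1 - z.2)) μ := by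
    fun_prop
  have h0 : 0 ≤ᵐ[μ] fun z => sqNorm (z.1 - z.2) := .of_forall fun z => sqNorm_nonneg _
  refine ⟨(lintegral_ofReal_ne_top_iff_integrable hm h0).mp
    (ne_top_of_le_ne_top ENNReal.ofReal_ne_top h), ?_⟩
  rw [integral_eq_lintegral_of_nonneg_ae h0 hm]
  exact ENNReal.toReal_le_of_le_ofReal (sq_nonneg ρ) h

end PointwiseBound

namespace IsNominal

variable {ι κ : Type*} [Fintype ι] [DecidableEq ι] [Fintype κ] {P0 : Measure (ι → ℝ)}
  (hP0 : IsNominal P0)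
include hP0

lemma integrable_mul_apply (i j : ι) : Integrable (fun ξ => ξ i * ξ j) P0 := by
  refine hP0.2.1.mono' (by fun_prop) (.of_forall fun ξ => ?_)
  have hi := sq_apply_le_sqNorm ξ i
  have hj := sq_apply_le_sqNorm ξ j
  rw [Real.norm_eq_abs, abs_mul]
  nlinarith [sq_abs (ξ i), sq_abs (ξ j), sq_nonneg (|ξ i| - |ξ j|)]

lemma integrable_dotProduct_mulVec (Q : Matrix ι ι ℝ) :
    Integrable (fun ξ => ξ ⬝ᵥ Q *ᵥ ξ) P0 := by
  simp_rw [dotProduct_mulVec_eq_sum]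
  exact integrable_finsetSum _ fun i _ => integrable_finsetSum _ fun j _ =>
    (hP0.integrable_mul_apply i j).const_mul _

lemma integral_dotProduct_mulVec (Q : Matrix ι ι ℝ) :
    ∫ ξ, ξ ⬝ᵥ Q *ᵥ ξ ∂P0 = Q.trace := by
  have hint (i j : ι) : Integrable (fun ξ => Q i j * (ξ i * ξ j)) P0 :=
    (hP0.integrable_mul_apply i j).const_mul _
  simp_rw [dotProduct_mulVec_eq_sum]
  rw [integral_finsetSum (f := fun i (ξ : ι → ℝ) => ∑ j, Q i j * (ξ i * ξ j)) _
    fun i _ => integrable_finsetSum _ fun j _ => hint i j]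
  refine Finset.sum_congr rfl fun i _ => ?_
  rw [integral_finsetSum _ fun j _ => hint i j]
  simp [integral_const_mul, hP0.2.2.2]

lemma integrable_sqNorm_mulVec (C : Matrix κ ι ℝ) :
    Integrable (fun ξ => sqNorm (C *ᵥ ξ)) P0 := by
  simpa only [sqNorm_mulVec] using hP0.integrable_dotProduct_mulVec (Cᵀ * C)

lemma integral_sqNorm_mulVec (C : Matrix κ ι ℝ) :
    ∫ ξ, sqNorm (C *ᵥ ξ) ∂P0 = (Cᵀ * C).trace := by
  simpa only [sqNorm_mulVec] using hP0.integral_dotProduct_mulVec (Cᵀ * C)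

lemma lintegral_sqNorm_mulVec (C : Matrix κ ι ℝ) :
    ∫⁻ ξ, ENNReal.ofReal (sqNorm (C *ᵥ ξ)) ∂P0 = ENNReal.ofReal (Cᵀ * C).trace := by
  rw [← hP0.integral_sqNorm_mulVec, ofReal_integral_eq_lintegral_ofReal
    (hP0.integrable_sqNorm_mulVec C) (.of_forall fun ξ => sqNorm_nonneg _)]

/-- The deterministic coupling `ξ ↦ (Aξ, ξ)` has cost `tr((A - 1)ᵀ(A - 1))`. -/
lemma memW2Ball_map_mulVec (A : Matrix ι ι ℝ) {ρ : ℝ}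
    (hcost : ((A - 1)ᵀ * (A - 1)).trace ≤ ρ ^ 2) :
    MemW2Ball (P0.map fun ξ => A *ᵥ ξ) P0 ρ := by
  have := hP0.1
  have hA : Measurable fun ξ : ι → ℝ => A *ᵥ ξ := by fun_prop
  have hpair : Measurable fun ξ : ι → ℝ => (A *ᵥ ξ, ξ) := hA.prodMk measurable_id
  refine ⟨Measure.isProbabilityMeasure_map hA.aemeasurable, ?_, P0.map fun ξ => (A *ᵥ ξ, ξ),
    Measure.isProbabilityMeasure_map hpair.aemeasurable, ?_, ?_, ?_⟩
  · rw [lintegral_map (by fun_prop) hA, hP0.lintegral_sqNorm_mulVec]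
    exact ENNReal.ofReal_lt_top
  · rw [Measure.map_map measurable_fst hpair]; rfl
  · rw [Measure.map_map measurable_snd hpair]; exact Measure.map_id
  · have hdiff (ξ : ι → ℝ) : (fun i => (A *ᵥ ξ) i - ξ i) = (A - 1) *ᵥ ξ := by
      rw [sub_mulVec, one_mulVec]; rfl
    rw [lintegral_map (by fun_prop) hpair]
    simp only [hdiff, hP0.lintegral_sqNorm_mulVec]
    exact ENNReal.ofReal_le_ofReal hcost

lemma integral_sqNorm_mulVec_le {P : Measure (ι → ℝ)} {ρ : ℝ} (hP : MemW2Ball P P0 ρ)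
    (T : Matrix κ ι ℝ) {γ : ℝ} (hγ : 0 < γ)
    (hG : (1 - γ⁻¹ • (Tᵀ * T)).PosDef) :
    ∫ ξ, sqNorm (T *ᵥ ξ) ∂P ≤ γ * ρ ^ 2 + γ * ((1 - γ⁻¹ • (Tᵀ * T))⁻¹ - 1).trace := by
  obtain ⟨-, -, μ, -, rfl, hsnd, hcost⟩ := hP
  set Q := (1 - γ⁻¹ • (Tᵀ * T))⁻¹ - 1
  obtain ⟨hc, hcρ⟩ := integral_sqNorm_sub_le_of_lintegral_le hcost
  have hq : Integrable (fun z : (ι → ℝ) × (ι → ℝ) => z.2 ⬝ᵥ Q *ᵥ z.2) μ := by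
    have := hP0.integrable_dotProduct_mulVec Q
    rw [← hsnd] at this
    exact this.comp_measurable measurable_snd
  have hqμ : ∫ z, z.2 ⬝ᵥ Q *ᵥ z.2 ∂μ = Q.trace := by
    rw [← hP0.integral_dotProduct_mulVec Q, ← hsnd, integral_map measurable_snd.aemeasurable
      (by fun_prop)]
  calc ∫ ξ, sqNorm (T *ᵥ ξ) ∂μ.map Prod.fst = ∫ z, sqNorm (T *ᵥ z.1) ∂μ :=
        integral_map measurable_fst.aemeasurable (by fun_prop)
    _ ≤ ∫ z, γ * sqNorm (z.1 - z.2) + γ * (z.2 ⬝ᵥ Q *ᵥ z.2) ∂μ :=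
        integral_mono_of_nonneg (.of_forall fun _ => sqNorm_nonneg _)
          ((hc.const_mul γ).add (hq.const_mul γ))
          (.of_forall fun z => sqNorm_mulVec_le_of_posDef T hγ hG z.1 z.2)
    _ = γ * ∫ z, sqNorm (z.1 - z.2) ∂μ + γ * Q.trace := by
        rw [integral_add (hc.const_mul γ) (hq.const_mul γ), integral_const_mul,
          integral_const_mul, hqμ]
    _ ≤ γ * ρ ^ 2 + γ * Q.trace := by gcongr

lemma integral_sqNorm_mulVec_map (C : Matrix κ ι ℝ) (A : Matrix ι ι ℝ) :
    ∫ ξ, sqNorm (C *ᵥ ξ) ∂(P0.map fun ξ => A *ᵥ ξ) = (Aᵀ * (Cᵀ * C) * A).trace := by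
  rw [integral_map (by fun_prop) (by fun_prop)]
  simp_rw [mulVec_mulVec]
  rw [hP0.integral_sqNorm_mulVec, transpose_mul]
  simp only [Matrix.mul_assoc]

end IsNominal

theorem stmt_5_general {r d : ℕ} (T : Matrix (Fin r) (Fin d) ℝ)
    (P0 : Measure (Fin d → ℝ)) (hP0 : IsNominal P0) (ρ : ℝ)
    (γs : ℝ) (hγs : opNormSq T < γs)
    (hγeq : ((((1 : Matrix (Fin r) (Fin r) ℝ) - γs⁻¹ • (T * Tᵀ))⁻¹ - 1) ^ 2).trace = ρ ^ 2) :
    MemW2Ball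
        (P0.map fun ξ => (((1 : Matrix (Fin d) (Fin d) ℝ) - γs⁻¹ • (Tᵀ * T))⁻¹).mulVec ξ)
        P0 ρ ∧
      (∫ ξ, sqNorm (T.mulVec ξ)
          ∂(P0.map fun ξ =>
              (((1 : Matrix (Fin d) (Fin d) ℝ) - γs⁻¹ • (Tᵀ * T))⁻¹).mulVec ξ)) =
        sSup (wcSet T P0 ρ) ∧
      sSup (wcSet T P0 ρ) =
        γs * ρ ^ 2 +
          γs * (((1 : Matrix (Fin r) (Fin r) ℝ) - γs⁻¹ • (T * Tᵀ))⁻¹ - 1).trace := by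
  have hγ := pos_of_opNormSq_lt hγs
  have hG := posDef_one_sub_inv_smul_of_opNormSq_lt hγs
  set A := ((1 : Matrix (Fin d) (Fin d) ℝ) - γs⁻¹ • (Tᵀ * T))⁻¹
  have hAt : Aᵀ = A := (isHermitian_iff_isSymm.mp hG.inv.isHermitian).eq
  have htr {k : ℕ} (hk : k ≠ 0) :
      ((A - 1) ^ k).trace =
        ((((1 : Matrix (Fin r) (Fin r) ℝ) - γs⁻¹ • (T * Tᵀ))⁻¹ - 1) ^ k).trace := by
    have hdet : (1 - (γs⁻¹ • Tᵀ) * T).det ≠ 0 := by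
      rw [Matrix.smul_mul]; exact hG.det_pos.ne'
    simpa only [Matrix.smul_mul, Matrix.mul_smul] using
      trace_inv_one_sub_mul_sub_one_pow_comm _ _ hdet hk
  have hcost : ((A - 1)ᵀ * (A - 1)).trace = ρ ^ 2 := by
    rw [transpose_sub, hAt, transpose_one, ← sq, htr two_ne_zero, hγeq]
  have hball := hP0.memW2Ball_map_mulVec A hcost.le
  have hvalue : ∫ ξ, sqNorm (T *ᵥ ξ) ∂(P0.map fun ξ => A *ᵥ ξ) =
      γs * ρ ^ 2 + γs * (((1 : Matrix (Fin r) (Fin r) ℝ) - γs⁻¹ • (T * Tᵀ))⁻¹ - 1).trace := by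
    rw [hP0.integral_sqNorm_mulVec_map, hAt, inv_mul_mul_inv_eq _ hγ.ne' hG.det_pos.ne',
      trace_smul, trace_add, htr two_ne_zero, hγeq, ← pow_one (A - 1), htr one_ne_zero, pow_one,
      smul_eq_mul, mul_add]
  have hmax : IsGreatest (wcSet T P0 ρ) (γs * ρ ^ 2 +
      γs * (((1 : Matrix (Fin r) (Fin r) ℝ) - γs⁻¹ • (T * Tᵀ))⁻¹ - 1).trace) := by
    refine ⟨⟨_, hball, hvalue.symm⟩, ?_⟩
    rintro _ ⟨P, hP, rfl⟩
    have := hP0.integral_sqNorm_mulVec_le hP T hγ hG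
    rwa [← pow_one (A - 1), htr one_ne_zero, pow_one] at this
  rw [hmax.csSup_eq]
  exact ⟨hball, hvalue, rfl⟩

/-- Attainment of the worst-case distribution: the pushforward of the nominal `P0` under
`ξ ↦ (I − γ*⁻¹ TᵀT)⁻¹ ξ` lies in the `W₂`-ball and attains the worst-case value. -/
theorem stmt_5 {r d : ℕ} (T : Matrix (Fin r) (Fin d) ℝ) (hT : T ≠ 0)
    (P0 : Measure (Fin d → ℝ)) (hP0 : IsNominal P0) (ρ : ℝ) (hρ : 0 < ρ)
    (γs : ℝ) (hγs : opNormSq T < γs)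
    (hγeq : ((((1 : Matrix (Fin r) (Fin r) ℝ) - γs⁻¹ • (T * Tᵀ))⁻¹ - 1) ^ 2).trace = ρ ^ 2)
    (hγuniq : ∀ γ : ℝ, opNormSq T < γ →
      ((((1 : Matrix (Fin r) (Fin r) ℝ) - γ⁻¹ • (T * Tᵀ))⁻¹ - 1) ^ 2).trace = ρ ^ 2 → γ = γs) :
    MemW2Ball
        (P0.map fun ξ => (((1 : Matrix (Fin d) (Fin d) ℝ) - γs⁻¹ • (Tᵀ * T))⁻¹).mulVec ξ)
        P0 ρ ∧
      (∫ ξ, sqNorm (T.mulVec ξ)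
          ∂(P0.map fun ξ =>
              (((1 : Matrix (Fin d) (Fin d) ℝ) - γs⁻¹ • (Tᵀ * T))⁻¹).mulVec ξ)) =
        sSup (wcSet T P0 ρ) ∧
      sSup (wcSet T P0 ρ) =
        γs * ρ ^ 2 +
          γs * (((1 : Matrix (Fin r) (Fin r) ℝ) - γs⁻¹ • (T * Tᵀ))⁻¹ - 1).trace :=
  stmt_5_general T P0 hP0 ρ γs hγs hγeq
end
end

section
/- Existence and uniqueness of the dual multiplier: Let A be a nonzero real symmetric positive semidefinite d×d matrix with largest eigenvalue λ_max(A), and let ρ > 0. The function φ(γ) := Tr[((I − γ⁻¹ A)⁻¹ − I)²] is continuous and strictly decreasing on the interval (λ_max(A), ∞), with φ(γ) → +∞ as γ ↓ λ_max(A) and φ(γ) → 0 as γ → ∞. Consequently, the equation Tr[((I − γ⁻¹ A)⁻¹ − I)²] = ρ² has a unique solution γ* in (λ_max(A), ∞). -/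
/-
Diagonalising `A`, and using `(1 - γ⁻¹ x)⁻¹ - 1 = x / (γ - x)` in the functional calculus,
`φ(γ) = ∑ᵢ (μᵢ / (γ - μᵢ))²` over the eigenvalues `0 ≤ μᵢ ≤ λ_max` of `A` whenever
`γ > λ_max`. Each summand is continuous and antitone on `(μᵢ, ∞)` and tends to `0` at `∞`,
while the summand of the top eigenvalue `λ_max > 0` (positive as `A ≠ 0`) is strictly
decreasing and blows up at `λ_max⁺`. The intermediate value theorem and strict monotonicity
then give exactly one solution of `φ(γ) = ρ²`.
-/

open Matrix

noncomputable section

/-- The largest eigenvalue of a real symmetric matrix `A`, characterized as the least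
`c` with `c·I − A ⪰ 0`. -/
def lambdaMax {d : ℕ} (A : Matrix (Fin d) (Fin d) ℝ) : ℝ :=
  sInf {c : ℝ | (c • (1 : Matrix (Fin d) (Fin d) ℝ) - A).PosSemidef}

/-- The function `φ(γ) = Tr[((I − γ⁻¹A)⁻¹ − I)²]`. -/
def phiFn {d : ℕ} (A : Matrix (Fin d) (Fin d) ℝ) (γ : ℝ) : ℝ :=
  ((((1 : Matrix (Fin d) (Fin d) ℝ) - γ⁻¹ • A)⁻¹ - 1) ^ 2).trace

open Set Filter Topology
open scoped MatrixOrder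

lemma one_sub_inv_mul_eq_div {γ : ℝ} (hγ : γ ≠ 0) (x : ℝ) : 1 - γ⁻¹ * x = (γ - x) / γ := by
  field_simp

namespace Matrix.IsHermitian

variable {n : Type*} [Fintype n] [DecidableEq n] {A : Matrix n n ℝ}

lemma posSemidef_smul_one_sub_iff (hA : A.IsHermitian) (c : ℝ) :
    (c • 1 - A).PosSemidef ↔ ∀ i, hA.eigenvalues i ≤ c := by
  rw [← Algebra.algebraMap_eq_smul_one, ← Matrix.le_iff,
    le_algebraMap_iff_spectrum_le hA.isSelfAdjoint, hA.spectrum_real_eq_range_eigenvalues,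
    forall_mem_range]

lemma trace_cfc (hA : A.IsHermitian) (f : ℝ → ℝ) :
    (cfc f A).trace = ∑ i, f (hA.eigenvalues i) := by
  rw [hA.cfc_eq, IsHermitian.cfc, Unitary.conjStarAlgAut_apply, trace_mul_cycle,
    Unitary.coe_star_mul_self, one_mul, trace_diagonal]
  rfl

end Matrix.IsHermitian

lemma lambdaMax_eq_ciSup {d : ℕ} [NeZero d] {A : Matrix (Fin d) (Fin d) ℝ}
    (hA : A.IsHermitian) : lambdaMax A = ⨆ i, hA.eigenvalues i := by
  have hset : {c : ℝ | (c • (1 : Matrix (Fin d) (Fin d) ℝ) - A).PosSemidef}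
      = upperBounds (range hA.eigenvalues) := by
    ext c
    simp [hA.posSemidef_smul_one_sub_iff, mem_upperBounds]
  rw [lambdaMax, hset, csInf_upperBounds_eq_csSup (Finite.bddAbove_range _) (range_nonempty _),
    sSup_range]

lemma phiFn_eq_sum {d : ℕ} {A : Matrix (Fin d) (Fin d) ℝ} (hA : A.IsHermitian) {γ : ℝ}
    (hγ : γ ≠ 0) (hμ : ∀ i, hA.eigenvalues i ≠ γ) :
    phiFn A γ = ∑ i, (hA.eigenvalues i / (γ - hA.eigenvalues i)) ^ 2 := by
  have hres : ∀ x ∈ spectrum ℝ A, 1 - γ⁻¹ * x ≠ 0 := by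
    rw [hA.spectrum_real_eq_range_eigenvalues]
    rintro - ⟨i, rfl⟩
    rw [one_sub_inv_mul_eq_div hγ]
    exact div_ne_zero (sub_ne_zero.2 (hμ i).symm) hγ
  have hlin : (1 : Matrix (Fin d) (Fin d) ℝ) - γ⁻¹ • A = cfc (fun x => 1 - γ⁻¹ * x) A := by
    rw [cfc_sub .., cfc_const_one .., cfc_const_mul .., cfc_id' ..]
  have hphi : phiFn A γ = (cfc (fun x => ((1 - γ⁻¹ * x)⁻¹ - 1) ^ 2) A).trace := by
    have hfin := A.finite_real_spectrum
    rw [phiFn, hlin, nonsing_inv_eq_ringInverse, ← cfc_inv _ _ hres (hfin.continuousOn _),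
      ← cfc_const_one ℝ A, ← cfc_sub _ _ _ (hfin.continuousOn _) (hfin.continuousOn _),
      ← cfc_pow _ _ _ (hfin.continuousOn _)]
  rw [hphi, hA.trace_cfc]
  refine Finset.sum_congr rfl fun i _ => ?_
  rw [one_sub_inv_mul_eq_div hγ, inv_div, div_sub_one (sub_ne_zero.2 (hμ i).symm), sub_sub_cancel]

section

variable {a : ℝ}

lemma continuousOn_sq_div_sub (a : ℝ) : ContinuousOn (fun γ => (a / (γ - a)) ^ 2) (Ioi a) :=
  .pow (continuousOn_const.div (by fun_prop) fun _ hγ => (sub_pos.2 (mem_Ioi.1 hγ)).ne') 2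

lemma antitoneOn_sq_div_sub (ha : 0 ≤ a) : AntitoneOn (fun γ => (a / (γ - a)) ^ 2) (Ioi a) :=
  fun x hx y _ hxy => pow_le_pow_left₀ (div_nonneg ha (by linarith [mem_Ioi.1 hx]))
    (div_le_div_of_nonneg_left ha (sub_pos.2 hx) (by linarith)) 2

lemma strictAntiOn_sq_div_sub (ha : 0 < a) : StrictAntiOn (fun γ => (a / (γ - a)) ^ 2) (Ioi a) :=
  fun x hx y _ hxy => pow_lt_pow_left₀ (div_lt_div_of_pos_left ha (sub_pos.2 hx) (by linarith))
    (div_nonneg ha.le (by linarith [mem_Ioi.1 hx])) two_ne_zero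

lemma tendsto_sq_div_sub_nhdsGT (ha : 0 < a) :
    Tendsto (fun γ => (a / (γ - a)) ^ 2) (𝓝[>] a) atTop := by
  have hsub : Tendsto (fun γ => γ - a) (𝓝[>] a) (𝓝[>] 0) :=
    tendsto_nhdsWithin_of_tendsto_nhds_of_eventually_within _
      (tendsto_nhdsWithin_of_tendsto_nhds ((continuous_sub_right a).tendsto' a 0 (sub_self a)))
      (eventually_nhdsWithin_of_forall fun _ hγ => sub_pos.2 (mem_Ioi.1 hγ))
  simp only [div_eq_mul_inv]
  exact (tendsto_pow_atTop two_ne_zero).comp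
    ((tendsto_inv_nhdsGT_zero.comp hsub).const_mul_atTop ha)

lemma tendsto_sq_div_sub_atTop (a : ℝ) :
    Tendsto (fun γ => (a / (γ - a)) ^ 2) atTop (𝓝 0) := by
  simpa [div_eq_mul_inv, sub_eq_add_neg] using
    ((tendsto_atTop_add_const_right _ (-a) tendsto_id).inv_tendsto_atTop.const_mul a).pow 2

end

section

variable {ι : Type*} [Fintype ι] (μ : ι → ℝ) {i₀ : ι}

lemma continuousOn_sum_sq_div_sub (hmax : ∀ i, μ i ≤ μ i₀) :
    ContinuousOn (fun γ => ∑ i, (μ i / (γ - μ i)) ^ 2) (Ioi (μ i₀)) :=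
  continuousOn_finsetSum _ fun i _ =>
    (continuousOn_sq_div_sub (μ i)).mono (Ioi_subset_Ioi (hmax i))

lemma strictAntiOn_sum_sq_div_sub (hμ : ∀ i, 0 ≤ μ i) (hmax : ∀ i, μ i ≤ μ i₀)
    (hpos : 0 < μ i₀) :
    StrictAntiOn (fun γ => ∑ i, (μ i / (γ - μ i)) ^ 2) (Ioi (μ i₀)) := by
  intro x hx y hy hxy
  refine Finset.sum_lt_sum (fun i _ => ?_)
    ⟨i₀, Finset.mem_univ _, strictAntiOn_sq_div_sub hpos hx hy hxy⟩
  have hsub := Ioi_subset_Ioi (hmax i)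
  exact antitoneOn_sq_div_sub (hμ i) (hsub hx) (hsub hy) hxy.le

lemma tendsto_sum_sq_div_sub_nhdsGT (hpos : 0 < μ i₀) :
    Tendsto (fun γ => ∑ i, (μ i / (γ - μ i)) ^ 2) (𝓝[>] (μ i₀)) atTop :=
  tendsto_atTop_mono (fun γ => Finset.single_le_sum (f := fun i => (μ i / (γ - μ i)) ^ 2)
    (fun _ _ => sq_nonneg _) (Finset.mem_univ i₀)) (tendsto_sq_div_sub_nhdsGT hpos)

lemma tendsto_sum_sq_div_sub_atTop :
    Tendsto (fun γ => ∑ i, (μ i / (γ - μ i)) ^ 2) atTop (𝓝 0) := by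
  simpa using tendsto_finsetSum Finset.univ fun i _ => tendsto_sq_div_sub_atTop (μ i)

end

lemma existsUnique_eq_of_strictAntiOn_Ioi {f : ℝ → ℝ} {m l c : ℝ}
    (hcont : ContinuousOn f (Ioi m)) (hanti : StrictAntiOn f (Ioi m))
    (hleft : Tendsto f (𝓝[>] m) atTop) (hright : Tendsto f atTop (𝓝 l)) (hc : l < c) :
    ∃! γ, γ ∈ Ioi m ∧ f γ = c := by
  obtain ⟨a, hfa, ha⟩ := ((hleft.eventually_gt_atTop c).and self_mem_nhdsWithin).exists
  obtain ⟨b, hfb, hab⟩ := ((hright.eventually_lt_const hc).and (eventually_gt_atTop a)).exists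
  have hsub : Icc a b ⊆ Ioi m := fun x hx => lt_of_lt_of_le ha hx.1
  obtain ⟨γ, hγ, rfl⟩ := intermediate_value_Icc' hab.le (hcont.mono hsub) ⟨hfb.le, hfa.le⟩
  exact ⟨γ, ⟨hsub hγ, rfl⟩, fun γ' ⟨hγ', he⟩ => hanti.injOn hγ' (hsub hγ) he⟩

/-- Existence and uniqueness of the dual multiplier: `φ` is continuous and strictly
decreasing on `(λ_max(A), ∞)`, blows up at `λ_max(A)⁺`, vanishes at `∞`, and hence the
equation `φ(γ) = ρ²` has a unique solution there. -/
theorem stmt_6 {d : ℕ} (A : Matrix (Fin d) (Fin d) ℝ) (hA : A.PosSemidef) (hA0 : A ≠ 0)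
    (ρ : ℝ) (hρ : 0 < ρ) :
    ContinuousOn (phiFn A) (Set.Ioi (lambdaMax A)) ∧
      StrictAntiOn (phiFn A) (Set.Ioi (lambdaMax A)) ∧
      Filter.Tendsto (phiFn A) (nhdsWithin (lambdaMax A) (Set.Ioi (lambdaMax A)))
        Filter.atTop ∧
      Filter.Tendsto (phiFn A) Filter.atTop (nhds 0) ∧
      ∃! γ : ℝ, γ ∈ Set.Ioi (lambdaMax A) ∧ phiFn A γ = ρ ^ 2 := by
  have : NeZero d := ⟨by rintro rfl; exact hA0 (Subsingleton.elim _ _)⟩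
  set μ := hA.isHermitian.eigenvalues
  obtain ⟨i₀, hi₀⟩ := exists_eq_ciSup_of_finite (f := μ)
  have hmax : ∀ i, μ i ≤ μ i₀ := fun i => hi₀ ▸ le_ciSup (Finite.bddAbove_range μ) i
  have hpos : 0 < μ i₀ := by
    obtain ⟨i, hi⟩ : ∃ i, μ i ≠ 0 := by
      by_contra! h
      exact hA0 (hA.isHermitian.eigenvalues_eq_zero_iff.1 (funext h))
    exact ((hA.eigenvalues_nonneg i).lt_of_ne' hi).trans_le (hmax i)
  have hφ : EqOn (fun γ => ∑ i, (μ i / (γ - μ i)) ^ 2) (phiFn A) (Ioi (μ i₀)) := fun γ hγ =>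
    (phiFn_eq_sum hA.isHermitian (hpos.trans hγ).ne' fun i => ((hmax i).trans_lt hγ).ne).symm
  rw [lambdaMax_eq_ciSup hA.isHermitian, ← hi₀]
  have hcont := (continuousOn_sum_sq_div_sub μ hmax).congr hφ.symm
  have hanti := (strictAntiOn_sum_sq_div_sub μ hA.eigenvalues_nonneg hmax hpos).congr hφ
  have hleft := (tendsto_sum_sq_div_sub_nhdsGT μ hpos).congr' (eventuallyEq_nhdsWithin_of_eqOn hφ)
  have hright := (tendsto_sum_sq_div_sub_atTop μ).congr'
    ((eventually_gt_atTop (μ i₀)).mono fun γ hγ => hφ hγ)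
  exact ⟨hcont, hanti, hleft, hright,
    existsUnique_eq_of_strictAntiOn_Ioi hcont hanti hleft hright (by positivity)⟩
end
end
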